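/- arXiv:0807.2011 — 6 statements merged into one kernel-verified Lean document; each statement's English description precedes it below -/
import Mathlib

section
/- For every β ∈ [0,1], in a congestion game with β-uniform altruists (all agents have altruism level β), the function Φ_β(S) = (1-β)·Φ(S) + β·c(S), where Φ is the Rosenthal potential and c the social cost, is an exact potential function: any unilateral deviation by an agent changes Φ_β by exactly the change in that agent's individual cost c_i(S) = β·c(S) + (1-β)·d_i(S). Consequently a pure Nash equilibrium exists. -/
open Finset

def cong {N E : Type*} [Fintype N] [DecidableEq E] (S : N → Finset E) (e : E) : ℕ :=
  (Finset.univ.filter (fun i => e ∈ S i)).card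

noncomputable def playerDelay {N E : Type*} [Fintype N] [DecidableEq E]
    (d : E → ℕ → ℝ) (S : N → Finset E) (i : N) : ℝ :=
  ∑ e ∈ S i, d e (cong S e)

noncomputable def socialCost {N E : Type*} [Fintype N] [Fintype E] [DecidableEq E]
    (d : E → ℕ → ℝ) (S : N → Finset E) : ℝ :=
  ∑ e : E, (cong S e : ℝ) * d e (cong S e)

noncomputable def rosenthal {N E : Type*} [Fintype N] [Fintype E] [DecidableEq E]
    (d : E → ℕ → ℝ) (S : N → Finset E) : ℝ :=
  ∑ e : E, ∑ x ∈ Finset.Icc 1 (cong S e), d e x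

/-- Individual cost of a `β`-altruist. -/
noncomputable def indivCost {N E : Type*} [Fintype N] [Fintype E] [DecidableEq E]
    (d : E → ℕ → ℝ) (β : ℝ) (S : N → Finset E) (i : N) : ℝ :=
  β * socialCost d S + (1 - β) * playerDelay d S i

/-- The β-uniform potential Φ_β = (1-β)·Φ + β·c. -/
noncomputable def potBeta {N E : Type*} [Fintype N] [Fintype E] [DecidableEq E]
    (d : E → ℕ → ℝ) (β : ℝ) (S : N → Finset E) : ℝ :=
  (1 - β) * rosenthal d S + β * socialCost d S

lemma cong_update_int {N E : Type*} [Fintype N] [DecidableEq N] [DecidableEq E]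
    (S : N → Finset E) (i : N) (T : Finset E) (e : E) :
    (cong (Function.update S i T) e : ℤ) =
      cong S e + (if e ∈ T then 1 else 0) - (if e ∈ S i then 1 else 0) := by
  unfold cong
  rw [Finset.card_filter, Finset.card_filter]
  have key : ∀ (g : N → ℕ), ∑ j, g j = g i + ∑ j ∈ Finset.univ.erase i, g j :=
    fun g => (Finset.add_sum_erase Finset.univ g (Finset.mem_univ i)).symm
  rw [key, key]
  have h1 : ∑ j ∈ Finset.univ.erase i, (if e ∈ Function.update S i T j then (1:ℕ) else 0)
      = ∑ j ∈ Finset.univ.erase i, (if e ∈ S j then (1:ℕ) else 0) := by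
    apply Finset.sum_congr rfl
    intro j hj
    rw [Function.update_of_ne (Finset.ne_of_mem_erase hj)]
  rw [h1, Function.update_self]
  push_cast
  split_ifs <;> ring

lemma rosenthal_exact {N E : Type*} [Fintype N] [DecidableEq N] [Fintype E] [DecidableEq E]
    (d : E → ℕ → ℝ) (S : N → Finset E) (i : N) (T : Finset E) :
    rosenthal d (Function.update S i T) - rosenthal d S =
      playerDelay d (Function.update S i T) i - playerDelay d S i := by
  set S' := Function.update S i T with hS'
  have hfe : ∀ e : E,
      (∑ x ∈ Finset.Icc 1 (cong S' e), d e x) - (∑ x ∈ Finset.Icc 1 (cong S e), d e x)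
      = (if e ∈ T then d e (cong S' e) else 0) - (if e ∈ S i then d e (cong S e) else 0) := by
    intro e
    have hc := cong_update_int S i T e
    rw [← hS'] at hc
    by_cases hT : e ∈ T <;> by_cases hSi : e ∈ S i
    · rw [if_pos hT, if_pos hSi] at hc
      have h0 : cong S' e = cong S e := by omega
      simp [hT, hSi, h0]
    · rw [if_pos hT, if_neg hSi] at hc
      have h1 : cong S' e = cong S e + 1 := by omega
      rw [h1, Finset.sum_Icc_succ_top (by omega), if_pos hT, if_neg hSi]
      ring
    · rw [if_neg hT, if_pos hSi] at hc
      have h1 : cong S e = cong S' e + 1 := by omega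
      rw [h1, Finset.sum_Icc_succ_top (by omega), if_neg hT, if_pos hSi]
      ring
    · rw [if_neg hT, if_neg hSi] at hc
      have h0 : cong S' e = cong S e := by omega
      simp [hT, hSi, h0]
  unfold rosenthal playerDelay
  rw [← Finset.sum_sub_distrib]
  calc ∑ e : E, ((∑ x ∈ Finset.Icc 1 (cong S' e), d e x) - ∑ x ∈ Finset.Icc 1 (cong S e), d e x)
      = ∑ e : E, ((if e ∈ T then d e (cong S' e) else 0) -
          (if e ∈ S i then d e (cong S e) else 0)) := Finset.sum_congr rfl (fun e _ => hfe e)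
    _ = (∑ e : E, if e ∈ T then d e (cong S' e) else 0) -
          ∑ e : E, if e ∈ S i then d e (cong S e) else 0 := Finset.sum_sub_distrib _ _
    _ = (∑ e ∈ T, d e (cong S' e)) - ∑ e ∈ S i, d e (cong S e) := by
          rw [Finset.sum_ite_mem, Finset.sum_ite_mem, Finset.univ_inter, Finset.univ_inter]
    _ = (∑ e ∈ S' i, d e (cong S' e)) - ∑ e ∈ S i, d e (cong S e) := by
          rw [hS', Function.update_self]

/-- for every β ∈ [0,1], Φ_β is an exact potential for the β-uniform
altruistic congestion game, and consequently a pure Nash equilibrium exists. -/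
theorem beta_uniform_exact_potential_and_NE {N E : Type*} [Fintype N] [DecidableEq N]
    [Fintype E] [DecidableEq E]
    (strat : N → Finset (Finset E)) (hne : ∀ i, (strat i).Nonempty)
    (d : E → ℕ → ℝ) (β : ℝ) (hβ : β ∈ Set.Icc (0 : ℝ) 1) :
    (∀ (S : N → Finset E), (∀ i, S i ∈ strat i) → ∀ (i : N), ∀ T ∈ strat i,
        potBeta d β (Function.update S i T) - potBeta d β S =
          indivCost d β (Function.update S i T) i - indivCost d β S i) ∧
    (∃ S : N → Finset E, (∀ i, S i ∈ strat i) ∧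
        ∀ (i : N), ∀ T ∈ strat i,
          indivCost d β S i ≤ indivCost d β (Function.update S i T) i) := by
  have exact : ∀ (S : N → Finset E) (i : N) (T : Finset E),
      potBeta d β (Function.update S i T) - potBeta d β S =
        indivCost d β (Function.update S i T) i - indivCost d β S i := by
    intro S i T
    have h := rosenthal_exact d S i T
    unfold potBeta indivCost
    linear_combination (1 - β) * h
  refine ⟨fun S _ i T _ => exact S i T, ?_⟩
  classical
  have hfeas : (Finset.univ.filter (fun S : N → Finset E => ∀ i, S i ∈ strat i)).Nonempty := by
    refine ⟨fun i => (hne i).choose, ?_⟩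
    simp only [Finset.mem_filter, Finset.mem_univ, true_and]
    exact fun i => (hne i).choose_spec
  obtain ⟨S₀, hS₀mem, hS₀min⟩ := Finset.exists_min_image _ (potBeta d β) hfeas
  simp only [Finset.mem_filter, Finset.mem_univ, true_and] at hS₀mem
  refine ⟨S₀, hS₀mem, fun i T hT => ?_⟩
  have hmem : Function.update S₀ i T ∈
      Finset.univ.filter (fun S : N → Finset E => ∀ j, S j ∈ strat j) := by
    simp only [Finset.mem_filter, Finset.mem_univ, true_and]
    intro j
    by_cases hj : j = i
    · subst hj; simpa using hT
    · rw [Function.update_of_ne hj]; exact hS₀mem j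
  have := hS₀min _ hmem
  have h := exact S₀ i T
  linarith
end

section
/- There exists a symmetric singleton congestion game with only pure altruists and pure egoists that admits no pure Nash equilibrium. Concretely: two identical resources e, f with delay d(1)=4, d(2)=8, d(3)=9, d(4)=11, three egoists (β=0) and one pure altruist (β=1), each choosing one of the two resources, has no pure Nash equilibrium. -/
open Finset

/-- Congestion in a symmetric singleton game with two resources (`Bool`):
number of agents on resource `r`. -/
def scong (S : Fin 4 → Bool) (r : Bool) : ℕ :=
  (Finset.univ.filter (fun i => S i = r)).card

/-- Social cost with common delay function `d` on the two resources. -/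
noncomputable def sc (d : ℕ → ℝ) (S : Fin 4 → Bool) : ℝ :=
  (scong S true : ℝ) * d (scong S true) + (scong S false : ℝ) * d (scong S false)

set_option maxRecDepth 8000 in
/-- the symmetric singleton game with two identical resources,
delays d(1)=4, d(2)=8, d(3)=9, d(4)=11, three egoists (agents 0,1,2) and one
pure altruist (agent 3) has no pure Nash equilibrium. -/
theorem no_pure_NE_example (d : ℕ → ℝ)
    (h1 : d 1 = 4) (h2 : d 2 = 8) (h3 : d 3 = 9) (h4 : d 4 = 11) :
    ¬ ∃ S : Fin 4 → Bool,
        -- no egoist can strictly improve her delay by switching resources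
        (∀ i : Fin 4, i ≠ 3 →
            d (scong S (S i)) ≤ d (scong S (!(S i)) + 1)) ∧
        -- the altruist cannot strictly decrease the social cost by switching
        (sc d S ≤ sc d (Function.update S 3 (!(S 3)))) := by
  rintro ⟨S, hE, hA⟩
  have key : ∀ T : Fin 4 → Bool, ∀ r, scong T r =
      (if T 0 = r then 1 else 0) + (if T 1 = r then 1 else 0) +
      (if T 2 = r then 1 else 0) + (if T 3 = r then 1 else 0) := by
    intro T r
    rw [scong, Finset.card_filter, Fin.sum_univ_four]
  have e0 := hE 0 (by decide)
  have e1 := hE 1 (by decide)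
  have e2 := hE 2 (by decide)
  have hu0 : ∀ b, Function.update S 3 b 0 = S 0 := fun b => by
    simp [Function.update]
  have hu1 : ∀ b, Function.update S 3 b 1 = S 1 := fun b => by
    simp [Function.update]
  have hu2 : ∀ b, Function.update S 3 b 2 = S 2 := fun b => by
    simp [Function.update]
  have hu3 : ∀ b, Function.update S 3 b 3 = b := fun b => by
    simp [Function.update]
  cases hb0 : S 0 <;> cases hb1 : S 1 <;> cases hb2 : S 2 <;> cases hb3 : S 3 <;>
    simp only [key, sc, hu0, hu1, hu2, hu3, hb0, hb1, hb2, hb3] at e0 e1 e2 hA <;>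
    norm_num at e0 e1 e2 hA <;>
    linarith
end

section
/- A pure altruist in a congestion game behaves exactly like a selfish agent with player-specific delay functions d'_e: a unilateral move of a pure altruist from strategy S_i to S'_i strictly decreases the social cost c if and only if it strictly decreases Σ_{e∈S'_i} d'_e(n'_e) compared to Σ_{e∈S_i} d'_e(n_e), where d'_e(k) = k·d_e(k) − (k−1)·d_e(k−1) for k ≥ 1 and d'_e(0) = 0, and n'_e denotes the congestion after the move. -/
open Finset

/-- Altruistic (marginal social cost) delay: d'(k) = k·d(k) − (k−1)·d(k−1),
with d'(0) = 0 (note `k - 1 = 0` in `ℕ` for `k = 0`). -/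
noncomputable def altD (d : ℕ → ℝ) (k : ℕ) : ℝ :=
  (k : ℝ) * d k - ((k - 1 : ℕ) : ℝ) * d (k - 1)

lemma card_filter_univ_split {N : Type*} [Fintype N] [DecidableEq N]
    (P : N → Prop) [DecidablePred P] (i : N) :
    (Finset.univ.filter P).card =
      ((Finset.univ.erase i).filter P).card + (if P i then 1 else 0) := by
  have h : (Finset.univ : Finset N) = insert i (Finset.univ.erase i) :=
    (Finset.insert_erase (Finset.mem_univ i)).symm
  conv_lhs => rw [h]
  rw [Finset.filter_insert]
  split
  · rw [Finset.card_insert_of_notMem]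
    intro hmem
    exact (Finset.mem_erase.mp (Finset.mem_of_mem_filter i hmem)).1 rfl
  · simp

lemma cong_update_split {N E : Type*} [Fintype N] [DecidableEq N] [DecidableEq E]
    (S : N → Finset E) (i : N) (T : Finset E) (e : E) :
    cong (Function.update S i T) e + (if e ∈ S i then 1 else 0)
      = cong S e + (if e ∈ T then 1 else 0) := by
  unfold cong
  rw [card_filter_univ_split (fun j => e ∈ Function.update S i T j) i,
      card_filter_univ_split (fun j => e ∈ S j) i]
  have hfe : (Finset.univ.erase i).filter (fun j => e ∈ Function.update S i T j)
      = (Finset.univ.erase i).filter (fun j => e ∈ S j) := by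
    apply Finset.filter_congr
    intro j hj
    rw [Function.update_of_ne (Finset.mem_erase.mp hj).1]
  simp only [Function.update_self, hfe]
  omega

lemma cong_pos_of_mem {N E : Type*} [Fintype N] [DecidableEq E]
    (S : N → Finset E) (i : N) (e : E) (h : e ∈ S i) : 1 ≤ cong S e := by
  unfold cong
  have : i ∈ Finset.univ.filter (fun j => e ∈ S j) := by
    simp [h]
  exact Finset.card_pos.mpr ⟨i, this⟩

/-- a unilateral move of a pure altruist from `S i` to `T` strictly
decreases the social cost iff it strictly decreases the sum of the player-specific
altruistic delays d'ₑ. -/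
theorem altruist_as_player_specific {N E : Type*} [Fintype N] [DecidableEq N]
    [Fintype E] [DecidableEq E]
    (d : E → ℕ → ℝ) (S : N → Finset E) (i : N) (T : Finset E) :
    socialCost d (Function.update S i T) < socialCost d S ↔
      ∑ e ∈ T, altD (d e) (cong (Function.update S i T) e) <
        ∑ e ∈ S i, altD (d e) (cong S e) := by
  set S' := Function.update S i T with hS'
  have key : socialCost d S' - socialCost d S =
      (∑ e ∈ T, altD (d e) (cong S' e)) - ∑ e ∈ S i, altD (d e) (cong S e) := by
    unfold socialCost
    rw [← Finset.sum_sub_distrib, ← Finset.univ_inter T, ← Finset.sum_ite_mem,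
        ← Finset.univ_inter (S i), ← Finset.sum_ite_mem, ← Finset.sum_sub_distrib]
    apply Finset.sum_congr rfl
    intro e _
    have hsplit := cong_update_split S i T e
    rw [← hS'] at hsplit
    by_cases hT : e ∈ T <;> by_cases hS : e ∈ S i <;>
      simp only [hT, hS, if_true, if_false] at hsplit ⊢
    · -- both: congestions equal
      have : cong S' e = cong S e := by omega
      rw [this]; ring
    · -- e ∈ T, e ∉ S i : cong S' e = cong S e + 1
      have hc : cong S' e = cong S e + 1 := by omega
      rw [hc]; unfold altD
      simp only [Nat.add_sub_cancel, Nat.cast_add, Nat.cast_one]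
      ring
    · -- e ∉ T, e ∈ S i : cong S e = cong S' e + 1
      have hc : cong S e = cong S' e + 1 := by omega
      rw [hc]; unfold altD
      simp only [Nat.add_sub_cancel, Nat.cast_add, Nat.cast_one]
      ring
    · have : cong S' e = cong S e := by omega
      rw [this]; ring
  constructor <;> intro h <;> nlinarith [key]
end

section
/- If a delay function d : ℕ → ℝ is non-decreasing and convex (i.e., d(k+1) − d(k) ≥ d(k) − d(k−1) for all k ≥ 1) with d(k) ≥ 0, then the altruistic delay function d'(k) = k·d(k) − (k−1)·d(k−1) (with d'(0)=0) is non-decreasing in k. -/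
/-- if `d` is non-negative, non-decreasing and convex, then the
altruistic delay `d'` is non-decreasing. -/
theorem altD_monotone_of_convex (d : ℕ → ℝ)
    (hnonneg : ∀ k, 0 ≤ d k)
    (hmono : ∀ k, d k ≤ d (k + 1))
    (hconvex : ∀ k, 1 ≤ k → d k - d (k - 1) ≤ d (k + 1) - d k) :
    ∀ k, altD d k ≤ altD d (k + 1) := by
  intro k
  match k with
  | 0 =>
    simp [altD]
    exact hnonneg 1
  | (n + 1) =>
    have hc := hconvex (n + 1) (by omega)
    simp only [Nat.add_sub_cancel] at hc
    have hm := hmono n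
    have hm2 := hmono (n + 1)
    simp only [altD, Nat.add_sub_cancel]
    push_cast
    nlinarith [Nat.cast_nonneg (α := ℝ) n]
end

section
/- For any congestion game with altruists in which all delay functions are linear of the form d_e(x) = a_e·x with a_e ≥ 0, the function Φ(S) = Σ_{e∈E} Σ_{j=1}^{n_e} a_e·j + Σ_{e∈E} a_e·n_e² − Σ_{i∈N} Σ_{e∈S_i} ((2β_i−1)/(β_i+1))·a_e is a generalized ordinal potential: whenever an agent i with altruism level β_i ∈ [0,1] strictly decreases her individual cost c_i = β_i·c + (1−β_i)·d_i by a unilateral deviation, Φ strictly decreases. Consequently, a pure Nash equilibrium exists and every sequential better-response dynamics converges. -/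
open Finset

/-- Delay of agent `i` under linear delays dₑ(x) = aₑ·x. -/
noncomputable def linDelay {N E : Type*} [Fintype N] [DecidableEq E]
    (a : E → ℝ) (S : N → Finset E) (i : N) : ℝ :=
  ∑ e ∈ S i, a e * (cong S e : ℝ)

/-- Social cost under linear delays: c(S) = Σₑ aₑ·nₑ². -/
noncomputable def linSocial {N E : Type*} [Fintype N] [Fintype E] [DecidableEq E]
    (a : E → ℝ) (S : N → Finset E) : ℝ :=
  ∑ e : E, a e * (cong S e : ℝ) ^ 2

/-- Individual cost of agent `i` with altruism level `β i`. -/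
noncomputable def linCost {N E : Type*} [Fintype N] [Fintype E] [DecidableEq E]
    (a : E → ℝ) (β : N → ℝ) (S : N → Finset E) (i : N) : ℝ :=
  β i * linSocial a S + (1 - β i) * linDelay a S i

/-- The weighted potential Φ. -/
noncomputable def linPot {N E : Type*} [Fintype N] [Fintype E] [DecidableEq E]
    (a : E → ℝ) (β : N → ℝ) (S : N → Finset E) : ℝ :=
  (∑ e : E, ∑ j ∈ Finset.Icc 1 (cong S e), a e * (j : ℝ)) +
    (∑ e : E, a e * (cong S e : ℝ) ^ 2) -
    ∑ i : N, ∑ e ∈ S i, ((2 * β i - 1) / (β i + 1)) * a e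

lemma gaussR (n : ℕ) : (∑ j ∈ Finset.Icc 1 n, (j:ℝ)) = n*(n+1)/2 := by
  induction n with
  | zero => simp
  | succ k ih => rw [Finset.sum_Icc_succ_top (by omega)]; push_cast [ih]; ring

lemma ptwise (a β M x y : ℝ) (hx : x = 0 ∨ x = 1) (hy : y = 0 ∨ y = 1) (hβ : β + 1 ≠ 0) :
    (β + 1) * (a * ((M + y) * (M + y + 1) / 2) + a * (M + y)^2
      - (a * ((M + x) * (M + x + 1) / 2) + a * (M + x)^2)
      - ((2*β - 1)/(β+1)) * (a * y - a * x))
  = 3 * (β * (a * (M + y)^2 - a * (M + x)^2)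
      + (1 - β) * (a * (M + y) * y - a * (M + x) * x)) := by
  rcases hx with h|h <;> rcases hy with h'|h' <;> subst h h' <;> field_simp <;> ring

lemma cong_split {N E : Type*} [Fintype N] [DecidableEq N] [DecidableEq E]
    (S : N → Finset E) (i : N) (e : E) :
    cong S e = ((Finset.univ.erase i).filter (fun j => e ∈ S j)).card
      + (if e ∈ S i then 1 else 0) := by
  unfold cong
  nth_rewrite 1 [← Finset.insert_erase (Finset.mem_univ i)]
  rw [Finset.filter_insert]
  split
  · rw [Finset.card_insert_of_notMem (by simp)]
  · simp

lemma cong_update {N E : Type*} [Fintype N] [DecidableEq N] [DecidableEq E]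
    (S : N → Finset E) (i : N) (T : Finset E) (e : E) :
    cong (Function.update S i T) e
      = ((Finset.univ.erase i).filter (fun j => e ∈ S j)).card
        + (if e ∈ T then 1 else 0) := by
  rw [cong_split (Function.update S i T) i e, Function.update_self]
  congr 2
  apply Finset.filter_congr
  intro j hj
  rw [Function.update_of_ne (Finset.ne_of_mem_erase hj)]

lemma pot_eq {N E : Type*} [Fintype N] [DecidableEq N] [Fintype E] [DecidableEq E]
    (a : E → ℝ) (β : N → ℝ) (S : N → Finset E) (i : N) (T : Finset E)
    (hβ : β i + 1 ≠ 0) :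
    (β i + 1) * (linPot a β (Function.update S i T) - linPot a β S)
      = 3 * (linCost a β (Function.update S i T) i - linCost a β S i) := by
  set S' := Function.update S i T with hS'
  have hS'i : S' i = T := Function.update_self i T S
  set m : E → ℝ := fun e => (((Finset.univ.erase i).filter (fun j => e ∈ S j)).card : ℝ) with hm
  set x : E → ℝ := fun e => if e ∈ S i then 1 else 0 with hx
  set y : E → ℝ := fun e => if e ∈ T then 1 else 0 with hy
  have hcS : ∀ e, (cong S e : ℝ) = m e + x e := by
    intro e; rw [cong_split S i e]; push_cast [hm, hx]
    split <;> simp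
  have hcS' : ∀ e, (cong S' e : ℝ) = m e + y e := by
    intro e; rw [hS', cong_update S i T e]; push_cast [hm, hy]
    split <;> simp
  -- Rosenthal sums
  have hRy : (∑ e : E, ∑ j ∈ Finset.Icc 1 (cong S' e), a e * (j:ℝ))
      = ∑ e : E, a e * ((m e + y e) * (m e + y e + 1) / 2) := by
    refine Finset.sum_congr rfl fun e _ => ?_
    rw [← Finset.mul_sum, gaussR, hcS' e]
  have hRx : (∑ e : E, ∑ j ∈ Finset.Icc 1 (cong S e), a e * (j:ℝ))
      = ∑ e : E, a e * ((m e + x e) * (m e + x e + 1) / 2) := by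
    refine Finset.sum_congr rfl fun e _ => ?_
    rw [← Finset.mul_sum, gaussR, hcS e]
  have hBy : (∑ e : E, a e * (cong S' e : ℝ)^2) = ∑ e : E, a e * (m e + y e)^2 :=
    Finset.sum_congr rfl fun e _ => by rw [hcS' e]
  have hBx : (∑ e : E, a e * (cong S e : ℝ)^2) = ∑ e : E, a e * (m e + x e)^2 :=
    Finset.sum_congr rfl fun e _ => by rw [hcS e]
  -- last (player) sum
  have hXi : (∑ e ∈ S i, ((2*β i - 1)/(β i + 1)) * a e)
      = ∑ e : E, ((2*β i - 1)/(β i + 1)) * (a e * x e) := by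
    rw [← Finset.univ_inter (S i), ← Finset.sum_ite_mem]
    refine Finset.sum_congr rfl fun e _ => ?_
    simp only [hx]; split <;> simp
  have hYT : (∑ e ∈ T, ((2*β i - 1)/(β i + 1)) * a e)
      = ∑ e : E, ((2*β i - 1)/(β i + 1)) * (a e * y e) := by
    rw [← Finset.univ_inter T, ← Finset.sum_ite_mem]
    refine Finset.sum_congr rfl fun e _ => ?_
    simp only [hy]; split <;> simp
  have hC : (∑ j : N, ∑ e ∈ S' j, ((2*β j - 1)/(β j + 1)) * a e)
      = (∑ j : N, ∑ e ∈ S j, ((2*β j - 1)/(β j + 1)) * a e)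
        - (∑ e : E, ((2*β i - 1)/(β i + 1)) * (a e * x e))
        + ∑ e : E, ((2*β i - 1)/(β i + 1)) * (a e * y e) := by
    have h1 : ∀ (W : N → Finset E),
        (∑ j : N, ∑ e ∈ W j, ((2*β j - 1)/(β j + 1)) * a e)
          = (∑ j ∈ Finset.univ.erase i, ∑ e ∈ W j, ((2*β j - 1)/(β j + 1)) * a e)
            + ∑ e ∈ W i, ((2*β i - 1)/(β i + 1)) * a e :=
      fun W => (Finset.sum_erase_add _ _ (Finset.mem_univ i)).symm
    rw [h1 S', h1 S]
    have h2 : (∑ j ∈ Finset.univ.erase i, ∑ e ∈ S' j, ((2*β j - 1)/(β j + 1)) * a e)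
        = ∑ j ∈ Finset.univ.erase i, ∑ e ∈ S j, ((2*β j - 1)/(β j + 1)) * a e := by
      refine Finset.sum_congr rfl fun j hj => ?_
      rw [hS', Function.update_of_ne (Finset.ne_of_mem_erase hj)]
    rw [h2, hS'i, hXi, hYT]
    ring
  -- delays
  have hDx : linDelay a S i = ∑ e : E, a e * (m e + x e) * x e := by
    unfold linDelay
    rw [← Finset.univ_inter (S i), ← Finset.sum_ite_mem]
    refine Finset.sum_congr rfl fun e _ => ?_
    rw [hcS e]; simp only [hx]; split <;> simp
  have hDy : linDelay a S' i = ∑ e : E, a e * (m e + y e) * y e := by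
    unfold linDelay
    rw [hS'i, ← Finset.univ_inter T, ← Finset.sum_ite_mem]
    refine Finset.sum_congr rfl fun e _ => ?_
    rw [hcS' e]; simp only [hy]; split <;> simp
  have EQ1 : linPot a β S' - linPot a β S
      = ∑ e : E, (a e * ((m e + y e) * (m e + y e + 1) / 2) + a e * (m e + y e)^2
          - (a e * ((m e + x e) * (m e + x e + 1) / 2) + a e * (m e + x e)^2)
          - ((2*β i - 1)/(β i + 1)) * (a e * y e - a e * x e)) := by
    unfold linPot
    rw [hRy, hRx, hBy, hBx, hC]
    simp only [mul_sub, Finset.sum_sub_distrib, Finset.sum_add_distrib]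
    ring
  have EQ2 : linCost a β S' i - linCost a β S i
      = ∑ e : E, (β i * (a e * (m e + y e)^2 - a e * (m e + x e)^2)
          + (1 - β i) * (a e * (m e + y e) * y e - a e * (m e + x e) * x e)) := by
    unfold linCost linSocial
    rw [hBy, hBx, hDy, hDx]
    simp only [mul_sub, Finset.sum_sub_distrib, Finset.sum_add_distrib, Finset.mul_sum]
    ring
  rw [EQ1, EQ2, Finset.mul_sum, Finset.mul_sum]
  refine Finset.sum_congr rfl fun e _ => ?_
  exact ptwise (a e) (β i) (m e) (x e) (y e)
    (by simp only [hx]; split <;> simp) (by simp only [hy]; split <;> simp) hβ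


/-- with linear delays dₑ(x) = aₑ·x (aₑ ≥ 0) and altruism levels
βᵢ ∈ [0,1], Φ is a generalized ordinal potential: every strict improvement step
strictly decreases Φ.  Consequently a pure Nash equilibrium exists and every
sequential better-response dynamics converges (there is no infinite sequence of -/
theorem linear_delays_potential_NE_and_convergence
    {N E : Type*} [Fintype N] [DecidableEq N] [Fintype E] [DecidableEq E]
    (strat : N → Finset (Finset E)) (hne : ∀ i, (strat i).Nonempty)
    (a : E → ℝ) (ha : ∀ e, 0 ≤ a e)
    (β : N → ℝ) (hβ : ∀ i, β i ∈ Set.Icc (0 : ℝ) 1) :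
    -- generalized ordinal potential
    (∀ (S : N → Finset E), (∀ i, S i ∈ strat i) → ∀ (i : N), ∀ T ∈ strat i,
        linCost a β (Function.update S i T) i < linCost a β S i →
        linPot a β (Function.update S i T) < linPot a β S) ∧
    -- existence of a pure Nash equilibrium
    (∃ S : N → Finset E, (∀ i, S i ∈ strat i) ∧
        ∀ (i : N), ∀ T ∈ strat i,
          linCost a β S i ≤ linCost a β (Function.update S i T) i) ∧
    -- convergence: no infinite sequence of strict better responses
    (¬ ∃ seq : ℕ → (N → Finset E),
        (∀ t, ∀ i, seq t i ∈ strat i) ∧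
        (∀ t, ∃ i : N, seq (t + 1) = Function.update (seq t) i (seq (t + 1) i) ∧
            linCost a β (seq (t + 1)) i < linCost a β (seq t) i)) := by
  have hβ1 : ∀ i, β i + 1 ≠ 0 := fun i => by have := (hβ i).1; linarith
  have hβpos : ∀ i, (0:ℝ) < β i + 1 := fun i => by have := (hβ i).1; linarith
  have pot : ∀ (S : N → Finset E) (i : N) (T : Finset E),
      linCost a β (Function.update S i T) i < linCost a β S i →
      linPot a β (Function.update S i T) < linPot a β S := by
    intro S i T hlt
    have h := pot_eq a β S i T (hβ1 i)
    nlinarith [hβpos i]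
  have hupd : ∀ (S : N → Finset E), (∀ j, S j ∈ strat j) → ∀ (i : N), ∀ T ∈ strat i,
      Function.update S i T ∈ Fintype.piFinset strat := by
    intro S hS i T hT
    rw [Fintype.mem_piFinset]
    intro j
    rcases eq_or_ne j i with rfl | hj
    · rwa [Function.update_self]
    · rw [Function.update_of_ne hj]; exact hS j
  refine ⟨fun S _ i T _ h => pot S i T h, ?_, ?_⟩
  · obtain ⟨S, hS, hmin⟩ := Finset.exists_min_image (Fintype.piFinset strat) (linPot a β)
      ⟨fun i => (hne i).choose, by
        rw [Fintype.mem_piFinset]; exact fun i => (hne i).choose_spec⟩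
    rw [Fintype.mem_piFinset] at hS
    refine ⟨S, hS, fun i T hT => ?_⟩
    by_contra hcon
    push_neg at hcon
    have h1 := pot S i T hcon
    have h2 := hmin _ (hupd S hS i T hT)
    linarith
  · rintro ⟨seq, hmem, hstep⟩
    have hdec : ∀ t, linPot a β (seq (t+1)) < linPot a β (seq t) := by
      intro t
      obtain ⟨i, heq, hlt⟩ := hstep t
      have h := pot (seq t) i (seq (t+1) i) (by rw [← heq]; exact hlt)
      rwa [← heq] at h
    have hanti : StrictAnti fun t => linPot a β (seq t) := strictAnti_nat_of_succ_lt hdec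
    have hsub : Set.range (fun t => linPot a β (seq t))
        ⊆ linPot a β '' ((Fintype.piFinset strat : Finset (N → Finset E)) : Set (N → Finset E)) := by
      rintro _ ⟨t, rfl⟩
      exact ⟨seq t, by rw [Finset.mem_coe, Fintype.mem_piFinset]; exact hmem t, rfl⟩
    exact Set.infinite_range_of_injective hanti.injective
      (((Fintype.piFinset strat).finite_toSet.image _).subset hsub)
end

section
/- In the 4-agent game of the non-existence example (two identical resources with d(1)=4, d(2)=8, d(3)=9, d(4)=11; three egoists and one pure altruist), in any state in which one resource has congestion 3 and the other congestion 1 and an egoist is on the congestion-3 resource, that egoist strictly improves her delay by switching; and in any state with congestion (2,2) the altruist strictly decreases social cost (from 32 to 31) by switching to the other resource. -/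
open Finset

lemma key1 : ∀ S : Fin 4 → Bool, ∀ i : Fin 4,
    scong S (S i) = 3 → scong S (!(S i)) = 1 →
    scong (Function.update S i (!(S i))) (!(S i)) = 2 := by decide

lemma key2 : ∀ S : Fin 4 → Bool, scong S true = 2 → scong S false = 2 →
    (scong (Function.update S 3 (!(S 3))) true = 3 ∧
     scong (Function.update S 3 (!(S 3))) false = 1) ∨
    (scong (Function.update S 3 (!(S 3))) true = 1 ∧
     scong (Function.update S 3 (!(S 3))) false = 3) := by decide

/-- in the 4-agent game (two identical resources,
d(1)=4, d(2)=8, d(3)=9, d(4)=11; egoists 0,1,2 and pure altruist 3):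
in any (3,1) state an egoist on the congestion-3 resource strictly improves by
switching, and in any (2,2) state the altruist strictly decreases the social
cost from 32 to 31 by switching. -/
theorem improvement_steps_in_example (d : ℕ → ℝ)
    (h1 : d 1 = 4) (h2 : d 2 = 8) (h3 : d 3 = 9) (h4 : d 4 = 11) :
    -- (3,1) states: an egoist on the crowded resource improves by switching
    (∀ S : Fin 4 → Bool, ∀ i : Fin 4, i ≠ 3 →
        scong S (S i) = 3 → scong S (!(S i)) = 1 →
        d (scong (Function.update S i (!(S i))) (!(S i))) < d (scong S (S i))) ∧
    -- (2,2) states: the altruist strictly decreases social cost from 32 to 31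
    (∀ S : Fin 4 → Bool, scong S true = 2 → scong S false = 2 →
        sc d S = 32 ∧
        sc d (Function.update S 3 (!(S 3))) = 31 ∧
        sc d (Function.update S 3 (!(S 3))) < sc d S) := by
  constructor
  · intro S i _ h3' h1'
    rw [key1 S i h3' h1', h3', h2, h3]
    norm_num
  · intro S ht hf
    have hsc : sc d S = 32 := by
      simp only [sc, ht, hf, h2]; norm_num
    have hsc' : sc d (Function.update S 3 (!(S 3))) = 31 := by
      rcases key2 S ht hf with ⟨a, b⟩ | ⟨a, b⟩ <;>
        simp only [sc, a, b, h1, h3] <;> norm_num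
    exact ⟨hsc, hsc', by rw [hsc, hsc']; norm_num⟩
end
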